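/- arXiv:2512.04617 — 7 statements merged into one kernel-verified Lean document; each statement's English description precedes it below -/
import Mathlib

section
/- Let a < b, let p : ℝ → ℝ be continuously differentiable on a neighborhood of [a,b] with p(t) > 0 on [a,b], let ψ_θ, h : ℝ → ℝ be continuously differentiable on a neighborhood of [a,b] with h(a) = h(b) = 0, and set ψ(t) = p'(t)/p(t). Then (1/2)∫_a^b p(t)(ψ(t) − ψ_θ(t))² h(t) dt = ∫_a^b p(t)[(1/2)ψ_θ(t)² h(t) + ψ_θ'(t) h(t) + ψ_θ(t) h'(t)] dt + (1/2)∫_a^b p(t) ψ(t)² h(t) dt. In particular, the explicit weighted score-matching loss of the model score ψ_θ against the data density p equals the implicit weighted score-matching objective plus a term not depending on ψ_θ. -/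
open MeasureTheory intervalIntegral

/-!
Write `s = p'/p`. Expanding the square, `p (s - ψθ)² h = p s² h - 2 p' ψθ h + p ψθ² h`, so
the cross term is the only one that involves both `p'` and `ψθ`. Integrating it by parts
against the weight `ψθ h`, which vanishes at both endpoints, turns `∫ p' ψθ h` into
`-∫ p (ψθ h)'`, and this is exactly the derivative part of the implicit objective.
-/

theorem intervalIntegral.integral_deriv_mul_eq_neg_integral_mul_deriv {a b : ℝ}
    {u u' v v' : ℝ → ℝ} (hu : ∀ x ∈ Set.uIcc a b, HasDerivAt u (u' x) x)
    (hv : ∀ x ∈ Set.uIcc a b, HasDerivAt v (v' x) x)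
    (hu' : IntervalIntegrable u' volume a b) (hv' : IntervalIntegrable v' volume a b)
    (hva : v a = 0) (hvb : v b = 0) :
    ∫ x in a..b, u' x * v x = -∫ x in a..b, u x * v' x := by
  rw [integral_mul_deriv_eq_deriv_mul hu hv hu' hv', hva, hvb]
  ring

-- The subtracted term is `(p ψθ h)'`, split as `p' (ψθ h) + p (ψθ h)'`.
theorem half_mul_explicit_wsm_integrand_eq {p pd ψθ ψθd h hd : ℝ} (hp : p ≠ 0) :
    1 / 2 * (p * (pd / p - ψθ) ^ 2 * h) =
      p * (1 / 2 * ψθ ^ 2 * h + ψθd * h + ψθ * hd) + 1 / 2 * (p * (pd / p) ^ 2 * h)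
        - (pd * (ψθ * h) + p * (ψθd * h + ψθ * hd)) := by
  field_simp
  ring

/-- **Theorem (explicit WSM = implicit WSM + const, one-dimensional case).**
For a positive continuously differentiable data density `p` on a neighborhood of
`[a,b]` with score `ψ = p'/p`, a continuously differentiable model score `ψθ`, and a
continuously differentiable weight `h` vanishing at both endpoints, the explicit
weighted score-matching loss equals the implicit weighted score-matching objective
plus a term not depending on `ψθ`. -/
theorem explicit_eq_implicit_wsm_one_dim
    {a b : ℝ} (hab : a < b)
    (p ψθ h pd ψθd hd : ℝ → ℝ)
    (hp : ∀ t ∈ Set.Icc a b, HasDerivAt p (pd t) t)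
    (hpc : ContinuousOn pd (Set.Icc a b))
    (hppos : ∀ t ∈ Set.Icc a b, 0 < p t)
    (hψθ : ∀ t ∈ Set.Icc a b, HasDerivAt ψθ (ψθd t) t)
    (hψθc : ContinuousOn ψθd (Set.Icc a b))
    (hh : ∀ t ∈ Set.Icc a b, HasDerivAt h (hd t) t)
    (hhc : ContinuousOn hd (Set.Icc a b))
    (hha : h a = 0) (hhb : h b = 0) :
    (1 / 2 : ℝ) * ∫ t in a..b, p t * (pd t / p t - ψθ t) ^ 2 * h t =
      (∫ t in a..b, p t *
          ((1 / 2) * ψθ t ^ 2 * h t + ψθd t * h t + ψθ t * hd t)) +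
        (1 / 2) * ∫ t in a..b, p t * (pd t / p t) ^ 2 * h t := by
  rw [← Set.uIcc_of_le hab.le] at hp hpc hppos hψθ hψθc hh hhc
  have hpcont : ContinuousOn p (Set.uIcc a b) :=
    fun t ht ↦ (hp t ht).continuousAt.continuousWithinAt
  have hψθcont : ContinuousOn ψθ (Set.uIcc a b) :=
    fun t ht ↦ (hψθ t ht).continuousAt.continuousWithinAt
  have hhcont : ContinuousOn h (Set.uIcc a b) :=
    fun t ht ↦ (hh t ht).continuousAt.continuousWithinAt
  have hp0 : ∀ t ∈ Set.uIcc a b, p t ≠ 0 := fun t ht ↦ (hppos t ht).ne'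
  have hibp : ∫ t in a..b, pd t * (ψθ t * h t) =
      -∫ t in a..b, p t * (ψθd t * h t + ψθ t * hd t) :=
    integral_deriv_mul_eq_neg_integral_mul_deriv hp (fun t ht ↦ (hψθ t ht).mul (hh t ht))
      hpc.intervalIntegrable ((hψθc.mul hhcont).add (hψθcont.mul hhc)).intervalIntegrable
      (by simp [hha]) (by simp [hhb])
  rw [← intervalIntegral.integral_const_mul,
    integral_congr fun t ht ↦ half_mul_explicit_wsm_integrand_eq (hp0 t ht),
    intervalIntegral.integral_sub, intervalIntegral.integral_add, intervalIntegral.integral_add,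
    intervalIntegral.integral_const_mul, hibp]
  · ring
  all_goals exact ContinuousOn.intervalIntegrable (by fun_prop (disch := exact hp0))
end

section
/- Fix an integer N ≥ 1 and reals a < b. Let j : ℝ^N → ℝ be continuously differentiable on a neighborhood of the cube [a,b]^N with j > 0 there; let h : ℝ → ℝ be continuously differentiable on a neighborhood of [a,b] with h(a) = h(b) = 0; for each 1 ≤ n ≤ N, let ψ_{n,θ} : ℝ^N → ℝ be continuously differentiable on a neighborhood of [a,b]^N, and set ψ_n(x) = (∂_{x_n} j(x))/j(x). Then (1/2)∫_{[a,b]^N} j(x) Σ_{n=1}^N (ψ_n(x) − ψ_{n,θ}(x))² h(x_n) dx = ∫_{[a,b]^N} j(x) Σ_{n=1}^N [(1/2)ψ_{n,θ}(x)² h(x_n) + ∂_{x_n}ψ_{n,θ}(x) h(x_n) + ψ_{n,θ}(x) h'(x_n)] dx + (1/2)∫_{[a,b]^N} j(x) Σ_{n=1}^N ψ_n(x)² h(x_n) dx. -/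
/-!
With `sₙ = ∂ₙj / j` the true and `ψₙ` the model score, expanding the square gives
`j (sₙ - ψₙ)² h(xₙ) / 2 = j sₙ² h(xₙ) / 2 + j ψₙ² h(xₙ) / 2 - ∂ₙj ψₙ h(xₙ)`, and the product rule
turns the cross term into `j (∂ₙψₙ h(xₙ) + ψₙ h'(xₙ)) - ∂ₙ(j ψₙ h(xₙ))`. The last term integrates
to zero over the cube: integrate first in `xₙ` (Fubini) and use `h(a) = h(b) = 0`.
-/

open MeasureTheory Set

theorem setIntegral_Icc_eq_zero_of_hasDerivAt {E : Type*} [NormedAddCommGroup E]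
    [NormedSpace ℝ E] [CompleteSpace E] {F f : ℝ → E} {a b : ℝ}
    (hF : ∀ u ∈ Icc a b, HasDerivAt F (f u) u) (hf : ContinuousOn f (Icc a b))
    (ha : F a = 0) (hb : F b = 0) :
    ∫ u in Icc a b, f u = 0 := by
  rcases le_or_gt a b with hab | hba
  · rw [integral_Icc_eq_integral_Ioc, ← intervalIntegral.integral_of_le hab,
      intervalIntegral.integral_eq_sub_of_hasDerivAt (by rwa [uIcc_of_le hab])
        (hf.intervalIntegrable_of_Icc hab), ha, hb, sub_zero]
  · rw [Icc_eq_empty_of_lt hba, Measure.restrict_empty, integral_zero_measure]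

theorem setIntegral_Icc_eq_setIntegral_insertNth {E : Type*} [NormedAddCommGroup E]
    [NormedSpace ℝ E] {k : ℕ} (n : Fin (k + 1)) {lo hi : Fin (k + 1) → ℝ}
    {f : (Fin (k + 1) → ℝ) → E} (hf : IntegrableOn f (Icc lo hi)) :
    ∫ x in Icc lo hi, f x =
      ∫ z in Icc (fun i => lo (n.succAbove i)) (fun i => hi (n.succAbove i)),
        ∫ u in Icc (lo n) (hi n), f (n.insertNth u z) := by
  set e : ℝ × (Fin k → ℝ) ≃ᵐ (Fin (k + 1) → ℝ) :=
    (MeasurableEquiv.piFinSuccAbove (fun _ => ℝ) n).symm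
  have he : MeasurePreserving e :=
    (volume_preserving_piFinSuccAbove (fun _ : Fin (k + 1) => ℝ) n).symm _
  have hpre : e ⁻¹' Icc lo hi =
      Icc (lo n) (hi n) ×ˢ Icc (fun i => lo (n.succAbove i)) (fun i => hi (n.succAbove i)) := by
    ext ⟨u, z⟩
    exact Fin.insertNth_mem_Icc
  have hfe : IntegrableOn (f ∘ e) (e ⁻¹' Icc lo hi) :=
    (he.integrableOn_comp_preimage e.measurableEmbedding).mpr hf
  rw [← he.setIntegral_preimage_emb e.measurableEmbedding, hpre, Measure.volume_eq_prod,
    ← Measure.prod_restrict, integral_prod_symm]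
  · rfl
  · rw [Measure.prod_restrict, ← Measure.volume_eq_prod, ← hpre]
    exact hfe

theorem setIntegral_univ_pi_Icc_eq_zero_of_hasDerivAt_update {E : Type*} [NormedAddCommGroup E]
    [NormedSpace ℝ E] [CompleteSpace E] {m : ℕ} (n : Fin m) {lo hi : Fin m → ℝ}
    {F f : (Fin m → ℝ) → E}
    (hF : ∀ x ∈ univ.pi fun i => Icc (lo i) (hi i),
      HasDerivAt (fun u => F (Function.update x n u)) (f x) (x n))
    (hf : ContinuousOn f (univ.pi fun i => Icc (lo i) (hi i)))
    (hlo : ∀ x, F (Function.update x n (lo n)) = 0)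
    (hhi : ∀ x, F (Function.update x n (hi n)) = 0) :
    ∫ x in univ.pi fun i => Icc (lo i) (hi i), f x = 0 := by
  obtain ⟨k, rfl⟩ : ∃ k, m = k + 1 := Nat.exists_eq_succ_of_ne_zero n.pos.ne'
  rw [pi_univ_Icc] at hF hf ⊢
  rw [setIntegral_Icc_eq_setIntegral_insertNth n (hf.integrableOn_compact isCompact_Icc)]
  refine setIntegral_eq_zero_of_forall_eq_zero fun z hz => ?_
  have hmem : ∀ u ∈ Icc (lo n) (hi n), n.insertNth u z ∈ Icc lo hi :=
    fun u hu => Fin.insertNth_mem_Icc.mpr ⟨hu, hz⟩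
  refine setIntegral_Icc_eq_zero_of_hasDerivAt (F := fun u => F (n.insertNth u z))
    (fun u hu => ?_) (hf.comp (by fun_prop) hmem) ?_ ?_
  · simpa only [Fin.update_insertNth, Fin.insertNth_apply_same] using hF _ (hmem u hu)
  · simpa only [Fin.update_insertNth] using hlo (n.insertNth 0 z)
  · simpa only [Fin.update_insertNth] using hhi (n.insertNth 0 z)

theorem ContinuousOn.comp_apply_univ_pi {ι X Y : Type*} [TopologicalSpace X]
    [TopologicalSpace Y] {s : Set X} {g : X → Y} (hg : ContinuousOn g s) (n : ι) :
    ContinuousOn (fun x : ι → X => g (x n)) (univ.pi fun _ => s) :=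
  hg.comp (continuous_apply n).continuousOn fun _ hx => hx n trivial

theorem setIntegral_univ_pi_Icc_partialDeriv_mul_mul_eq_zero {m : ℕ} (n : Fin m) {a b : ℝ}
    {j Dj ψ Dψ : (Fin m → ℝ) → ℝ} {h hd : ℝ → ℝ}
    (hDj : ∀ x ∈ univ.pi (fun _ => Icc a b),
      HasDerivAt (fun u => j (Function.update x n u)) (Dj x) (x n))
    (hψd : ∀ x ∈ univ.pi (fun _ => Icc a b),
      HasDerivAt (fun u => ψ (Function.update x n u)) (Dψ x) (x n))
    (hhd : ∀ u ∈ Icc a b, HasDerivAt h (hd u) u)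
    (hjc : ContinuousOn j (univ.pi fun _ => Icc a b))
    (hDjc : ContinuousOn Dj (univ.pi fun _ => Icc a b))
    (hψc : ContinuousOn ψ (univ.pi fun _ => Icc a b))
    (hDψc : ContinuousOn Dψ (univ.pi fun _ => Icc a b))
    (hhdc : ContinuousOn hd (Icc a b)) (hha : h a = 0) (hhb : h b = 0) :
    ∫ x in univ.pi fun _ => Icc a b,
      ((Dj x * ψ x + j x * Dψ x) * h (x n) + j x * ψ x * hd (x n)) = 0 := by
  refine setIntegral_univ_pi_Icc_eq_zero_of_hasDerivAt_update n
    (F := fun x => j x * ψ x * h (x n)) (fun x hx => ?_) ?_ (fun x => by simp [hha])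
    (fun x => by simp [hhb])
  · simpa only [Function.update_self, Function.update_eq_self] using
      ((hDj x hx).fun_mul (hψd x hx)).fun_mul (hhd _ (hx n trivial))
  · exact (((hDjc.mul hψc).add (hjc.mul hDψc)).mul ((HasDerivAt.continuousOn hhd).comp_apply_univ_pi n)).add
      ((hjc.mul hψc).mul (hhdc.comp_apply_univ_pi n))

theorem sum_score_matching_integrand_identity {ι : Type*} [Fintype ι] {j : ℝ} (hj : j ≠ 0)
    (D ψ Dψ h hd : ι → ℝ) :
    (1 / 2) * (j * ∑ n, (D n / j - ψ n) ^ 2 * h n) +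
        ∑ n, ((D n * ψ n + j * Dψ n) * h n + j * ψ n * hd n) =
      j * ∑ n, ((1 / 2) * ψ n ^ 2 * h n + Dψ n * h n + ψ n * hd n) +
        (1 / 2) * (j * ∑ n, (D n / j) ^ 2 * h n) := by
  simp only [Finset.mul_sum, ← Finset.sum_add_distrib]
  refine Finset.sum_congr rfl fun n _ => ?_
  field_simp
  ring

theorem wsm_cube_equivalence_general
    {m : ℕ} {a b : ℝ}
    (j : (Fin m → ℝ) → ℝ) (Dj : Fin m → (Fin m → ℝ) → ℝ)
    (ψ : Fin m → (Fin m → ℝ) → ℝ) (Dψ : Fin m → (Fin m → ℝ) → ℝ)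
    (h hd : ℝ → ℝ)
    (hjpos : ∀ x ∈ Set.univ.pi (fun _ : Fin m => Set.Icc a b), 0 < j x)
    (hjc : ContinuousOn j (Set.univ.pi fun _ : Fin m => Set.Icc a b))
    (hDj : ∀ (n : Fin m), ∀ x ∈ Set.univ.pi (fun _ : Fin m => Set.Icc a b),
      HasDerivAt (fun u => j (Function.update x n u)) (Dj n x) (x n))
    (hDjc : ∀ n, ContinuousOn (Dj n) (Set.univ.pi fun _ : Fin m => Set.Icc a b))
    (hψd : ∀ (n : Fin m), ∀ x ∈ Set.univ.pi (fun _ : Fin m => Set.Icc a b),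
      HasDerivAt (fun u => ψ n (Function.update x n u)) (Dψ n x) (x n))
    (hψc : ∀ n, ContinuousOn (ψ n) (Set.univ.pi fun _ : Fin m => Set.Icc a b))
    (hDψc : ∀ n, ContinuousOn (Dψ n) (Set.univ.pi fun _ : Fin m => Set.Icc a b))
    (hhd : ∀ u ∈ Set.Icc a b, HasDerivAt h (hd u) u)
    (hhdc : ContinuousOn hd (Set.Icc a b))
    (hha : h a = 0) (hhb : h b = 0) :
    (1 / 2 : ℝ) * ∫ x in Set.univ.pi (fun _ : Fin m => Set.Icc a b),
        j x * ∑ n, (Dj n x / j x - ψ n x) ^ 2 * h (x n)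
      = (∫ x in Set.univ.pi (fun _ : Fin m => Set.Icc a b),
            j x * ∑ n, ((1 / 2) * ψ n x ^ 2 * h (x n) + Dψ n x * h (x n) +
              ψ n x * hd (x n)))
        + (1 / 2) * ∫ x in Set.univ.pi (fun _ : Fin m => Set.Icc a b),
            j x * ∑ n, (Dj n x / j x) ^ 2 * h (x n) := by
  set S := univ.pi fun _ : Fin m => Icc a b
  have hSc : IsCompact S := isCompact_univ_pi fun _ => isCompact_Icc
  have hj0 : ∀ x ∈ S, j x ≠ 0 := fun x hx => (hjpos x hx).ne'
  have hhS : ∀ n, ContinuousOn (fun x : Fin m → ℝ => h (x n)) S :=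
    (HasDerivAt.continuousOn hhd).comp_apply_univ_pi
  have hhdS : ∀ n, ContinuousOn (fun x : Fin m → ℝ => hd (x n)) S := hhdc.comp_apply_univ_pi
  have hsc : ∀ n, ContinuousOn (fun x => Dj n x / j x) S := fun n => (hDjc n).div hjc hj0
  have hG : ∀ n, ∫ x in S, ((Dj n x * ψ n x + j x * Dψ n x) * h (x n) +
      j x * ψ n x * hd (x n)) = 0 := fun n =>
    setIntegral_univ_pi_Icc_partialDeriv_mul_mul_eq_zero n (hDj n) (hψd n) hhd hjc (hDjc n)
      (hψc n) (hDψc n) hhdc hha hhb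
  have hGi : ∀ n, IntegrableOn (fun x => (Dj n x * ψ n x + j x * Dψ n x) * h (x n) +
      j x * ψ n x * hd (x n)) S := fun n =>
    (((((hDjc n).mul (hψc n)).add (hjc.mul (hDψc n))).mul (hhS n)).add
      ((hjc.mul (hψc n)).mul (hhdS n))).integrableOn_compact hSc
  have hLi : IntegrableOn (fun x => j x * ∑ n, (Dj n x / j x - ψ n x) ^ 2 * h (x n)) S :=
    (hjc.mul (continuousOn_finsetSum _ fun n _ =>
      (((hsc n).sub (hψc n)).pow 2).mul (hhS n))).integrableOn_compact hSc
  have hIi : IntegrableOn (fun x => j x * ∑ n, ((1 / 2) * ψ n x ^ 2 * h (x n) +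
      Dψ n x * h (x n) + ψ n x * hd (x n))) S :=
    (hjc.mul (continuousOn_finsetSum _ fun n _ =>
      (((continuousOn_const.mul ((hψc n).pow 2)).mul (hhS n)).add
        ((hDψc n).mul (hhS n))).add ((hψc n).mul (hhdS n)))).integrableOn_compact hSc
  have hCi : IntegrableOn (fun x => j x * ∑ n, (Dj n x / j x) ^ 2 * h (x n)) S :=
    (hjc.mul (continuousOn_finsetSum _ fun n _ =>
      ((hsc n).pow 2).mul (hhS n))).integrableOn_compact hSc
  calc (1 / 2 : ℝ) * ∫ x in S, j x * ∑ n, (Dj n x / j x - ψ n x) ^ 2 * h (x n)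
      = ∫ x in S, ((1 / 2) * (j x * ∑ n, (Dj n x / j x - ψ n x) ^ 2 * h (x n)) +
          ∑ n, ((Dj n x * ψ n x + j x * Dψ n x) * h (x n) + j x * ψ n x * hd (x n))) := by
        rw [integral_add (hLi.const_mul _) (integrable_finsetSum _ fun n _ => hGi n),
          integral_const_mul, integral_finsetSum _ fun n _ => hGi n]
        simp [hG]
    _ = _ := setIntegral_congr_fun (MeasurableSet.univ_pi fun _ => measurableSet_Icc)
        fun x hx => sum_score_matching_integrand_identity (hj0 x hx) _ _ _ _ _
    _ = _ := by rw [integral_add hIi (hCi.const_mul _), integral_const_mul]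

/-- **Theorem (explicit WSM = implicit WSM + const on a cube, fixed number of points).**
For an `m`-point Janossy density `j > 0`, continuously differentiable on a neighborhood
of the cube `[a,b]^m` (expressed via every partial derivative `Dj n` existing at each
point of the cube, together with continuity of `j` and `Dj n` on the cube), model
scores `ψ n` with partial derivatives `Dψ n = ∂_{x_n} ψ n`, and a weight `h`
vanishing at both endpoints of `[a,b]`, the explicit weighted score-matching loss
(with true scores `ψ_n = ∂_{x_n} j / j`) equals the implicit weighted score-matching
objective plus a term not depending on the model scores. -/
theorem wsm_cube_equivalence
    {m : ℕ} (hm : 1 ≤ m) {a b : ℝ} (hab : a < b)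
    (j : (Fin m → ℝ) → ℝ) (Dj : Fin m → (Fin m → ℝ) → ℝ)
    (ψ : Fin m → (Fin m → ℝ) → ℝ) (Dψ : Fin m → (Fin m → ℝ) → ℝ)
    (h hd : ℝ → ℝ)
    (hjpos : ∀ x ∈ Set.univ.pi (fun _ : Fin m => Set.Icc a b), 0 < j x)
    (hjc : ContinuousOn j (Set.univ.pi fun _ : Fin m => Set.Icc a b))
    (hDj : ∀ (n : Fin m), ∀ x ∈ Set.univ.pi (fun _ : Fin m => Set.Icc a b),
      HasDerivAt (fun u => j (Function.update x n u)) (Dj n x) (x n))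
    (hDjc : ∀ n, ContinuousOn (Dj n) (Set.univ.pi fun _ : Fin m => Set.Icc a b))
    (hψd : ∀ (n : Fin m), ∀ x ∈ Set.univ.pi (fun _ : Fin m => Set.Icc a b),
      HasDerivAt (fun u => ψ n (Function.update x n u)) (Dψ n x) (x n))
    (hψc : ∀ n, ContinuousOn (ψ n) (Set.univ.pi fun _ : Fin m => Set.Icc a b))
    (hDψc : ∀ n, ContinuousOn (Dψ n) (Set.univ.pi fun _ : Fin m => Set.Icc a b))
    (hhd : ∀ u ∈ Set.Icc a b, HasDerivAt h (hd u) u)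
    (hhdc : ContinuousOn hd (Set.Icc a b))
    (hha : h a = 0) (hhb : h b = 0) :
    (1 / 2 : ℝ) * ∫ x in Set.univ.pi (fun _ : Fin m => Set.Icc a b),
        j x * ∑ n, (Dj n x / j x - ψ n x) ^ 2 * h (x n)
      = (∫ x in Set.univ.pi (fun _ : Fin m => Set.Icc a b),
            j x * ∑ n, ((1 / 2) * ψ n x ^ 2 * h (x n) + Dψ n x * h (x n) +
              ψ n x * hd (x n)))
        + (1 / 2) * ∫ x in Set.univ.pi (fun _ : Fin m => Set.Icc a b),
            j x * ∑ n, (Dj n x / j x) ^ 2 * h (x n) :=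
  wsm_cube_equivalence_general j Dj ψ Dψ h hd hjpos hjc hDj hDjc hψd hψc hDψc hhd hhdc hha hhb
end

section
/- Let I ⊆ ℝ be an open interval, g : I → ℝ and G : ℝ → I mutually inverse with G differentiable, G' = φ, φ > 0 and φ twice differentiable, g differentiable on I with g'(x)·φ(g(x)) = 1 for all x ∈ I. Define the weight h : I → ℝ by h(x) = φ(g(x))², so that h'(x) = 2φ'(g(x)). Let ψ_θ : I → ℝ be differentiable and define the transformed model score Ψ_θ(y) = ψ_θ(G(y))·φ(y) + φ'(y)/φ(y). Then for every y ∈ ℝ, (1/2)Ψ_θ(y)² + Ψ_θ'(y) = (1/2)ψ_θ(G(y))² h(G(y)) + ψ_θ'(G(y)) h(G(y)) + ψ_θ(G(y)) h'(G(y)) + c(y), where c(y) = (1/2)(φ'(y)/φ(y))² + (φ'/φ)'(y) does not depend on θ. Consequently, if additionally g is a monotone continuously differentiable bijection of I onto ℝ, p : I → ℝ is a positive density with transformed density p_Y(y) = p(G(y))φ(y), and all displayed integrands are integrable, then ∫_ℝ p_Y(y)[(1/2)Ψ_θ(y)² + Ψ_θ'(y)] dy = ∫_I p(x)[(1/2)ψ_θ(x)²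 h(x) + ψ_θ'(x) h(x) + ψ_θ(x) h'(x)] dx + C with C = ∫_I p(x) c(g(x)) dx independent of θ; i.e., implicit score matching after the change of variables Y = g(X) coincides, up to an additive constant, with weighted score matching with weight h(x) = φ(g(x))². -/
open MeasureTheory

/-- **Theorem (change of variables is equivalent to weighted score matching).**
Let `I` be an open interval, `g : I → ℝ` and `G : ℝ → I` mutually inverse with
`G' = φ > 0`, `φ` twice differentiable, `g' x * φ (g x) = 1` on `I`, weight
`h x = φ (g x)^2` with `hd x = 2 φ' (g x)`, model score `ψ` differentiable on `I`, and
transformed score `Ψ y = ψ (G y) φ y + φ' y / φ y`. Then pointwise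
`(1/2) Ψ² + Ψ'` equals the weighted score-matching integrand evaluated at `G y` plus a
θ-independent term `c y`; and consequently, for a positive density `p` on `I` with
transformed density `pY y = p (G y) φ y` (under monotonicity, continuous
differentiability of `g`, and integrability), implicit score matching after the change
of variables coincides with weighted score matching with weight `h`, up to an additive
constant. -/
theorem change_of_variable_eq_weighted_score_matching
    {I : Set ℝ} (hIopen : IsOpen I) (hIconn : I.OrdConnected)
    (g G : ℝ → ℝ) (hGmem : ∀ y, G y ∈ I)
    (hinv₁ : ∀ x ∈ I, G (g x) = x) (hinv₂ : ∀ y, g (G y) = y)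
    (φ φd : ℝ → ℝ) (hφpos : ∀ y, 0 < φ y)
    (hφ : ∀ y, HasDerivAt φ (φd y) y)
    (hφdd : ∀ y, DifferentiableAt ℝ φd y)
    (hG : ∀ y, HasDerivAt G (φ y) y)
    (gd : ℝ → ℝ) (hg : ∀ x ∈ I, HasDerivAt g (gd x) x)
    (hgdφ : ∀ x ∈ I, gd x * φ (g x) = 1)
    (h hd : ℝ → ℝ) (hh : ∀ x, h x = φ (g x) ^ 2)
    (hhd : ∀ x, hd x = 2 * φd (g x))
    (ψ ψd : ℝ → ℝ) (hψ : ∀ x ∈ I, HasDerivAt ψ (ψd x) x)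
    (Ψ : ℝ → ℝ) (hΨ : ∀ y, Ψ y = ψ (G y) * φ y + φd y / φ y)
    (c : ℝ → ℝ)
    (hc : ∀ y, c y = (1 / 2) * (φd y / φ y) ^ 2 + deriv (fun z => φd z / φ z) y) :
    (∀ y, (1 / 2) * Ψ y ^ 2 + deriv Ψ y =
        (1 / 2) * ψ (G y) ^ 2 * h (G y) + ψd (G y) * h (G y) +
          ψ (G y) * hd (G y) + c y) ∧
    (∀ p pY : ℝ → ℝ,
      StrictMonoOn g I → ContinuousOn gd I →
      (∀ x ∈ I, 0 < p x) → (∫ x in I, p x) = 1 →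
      (∀ y, pY y = p (G y) * φ y) →
      Integrable (fun y => pY y * ((1 / 2) * Ψ y ^ 2 + deriv Ψ y)) →
      IntegrableOn
        (fun x => p x * ((1 / 2) * ψ x ^ 2 * h x + ψd x * h x + ψ x * hd x)) I →
      IntegrableOn (fun x => p x * c (g x)) I →
      (∫ y, pY y * ((1 / 2) * Ψ y ^ 2 + deriv Ψ y)) =
        (∫ x in I, p x * ((1 / 2) * ψ x ^ 2 * h x + ψd x * h x + ψ x * hd x)) +
          ∫ x in I, p x * c (g x)) := by
  have key : ∀ y, (1 / 2) * Ψ y ^ 2 + deriv Ψ y =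
      (1 / 2) * ψ (G y) ^ 2 * h (G y) + ψd (G y) * h (G y) +
        ψ (G y) * hd (G y) + c y := by
    intro y
    have hφne : φ y ≠ 0 := ne_of_gt (hφpos y)
    have hq : HasDerivAt (fun z => φd z / φ z) (deriv (fun z => φd z / φ z) y) y :=
      (((hφdd y).div (hφ y).differentiableAt hφne)).hasDerivAt
    have hψG : HasDerivAt (fun z => ψ (G z)) (ψd (G y) * φ y) y :=
      (hψ (G y) (hGmem y)).comp y (hG y)
    have hΨd : HasDerivAt Ψ
        (ψd (G y) * φ y * φ y + ψ (G y) * φd y + deriv (fun z => φd z / φ z) y) y := by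
      have : HasDerivAt (fun z => ψ (G z) * φ z + φd z / φ z)
          ((ψd (G y) * φ y) * φ y + ψ (G y) * φd y + deriv (fun z => φd z / φ z) y) y :=
        (hψG.mul (hφ y)).add hq
      have he : Ψ = fun z => ψ (G z) * φ z + φd z / φ z := funext hΨ
      rw [he]; exact this
    rw [hΨd.deriv, hΨ y, hh (G y), hhd (G y), hinv₂ y, hc y]
    field_simp
    ring
  refine ⟨key, ?_⟩
  intro p pY _ _ _ _ hpY hint1 hint2 hint3
  have hGim : G '' Set.univ = I := by
    apply Set.Subset.antisymm
    · rintro _ ⟨y, -, rfl⟩; exact hGmem y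
    · intro x hx; exact ⟨g x, trivial, hinv₁ x hx⟩
  have hGinj : Set.InjOn G Set.univ := fun a _ b _ hab => by
    have := congrArg g hab; rwa [hinv₂, hinv₂] at this
  set F : ℝ → ℝ := fun x => p x * ((1 / 2) * ψ x ^ 2 * h x + ψd x * h x + ψ x * hd x)
      + p x * c (g x) with hF
  have hcov : ∫ x in I, F x = ∫ y, pY y * ((1 / 2) * Ψ y ^ 2 + deriv Ψ y) := by
    rw [← hGim, integral_image_eq_integral_abs_deriv_smul MeasurableSet.univ
        (fun y _ => (hG y).hasDerivWithinAt) hGinj F]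
    rw [Measure.restrict_univ]
    congr 1; funext y
    rw [key y, hpY y, abs_of_pos (hφpos y), smul_eq_mul, hF]
    simp only [hinv₂ y]
    ring
  rw [← hcov, hF]; exact integral_add hint2 hint3
end

section
/- Let t₀ < T be reals, let λ : ℝ → ℝ be differentiable with λ(t) > 0 for all t ∈ (t₀,T), and let Λ : ℝ → ℝ be differentiable with Λ'(t) = λ(t) for all t ∈ (t₀,T). Let α ∈ ℝ be such that 1 − α·exp(Λ(t)) > 0 for all t ∈ (t₀,T), and define f(t) = λ(t)/(1 − α·exp(Λ(t))). Then f is positive and differentiable on (t₀,T), and for every t ∈ (t₀,T), f'(t)/f(t) − f(t) = λ'(t)/λ(t) − λ(t). -/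
/-- **Theorem (the one-parameter family of intensities matching a conditional score).**
Let `λ` be a differentiable intensity, positive on `(t₀,T)`, with cumulative intensity
`Λ` satisfying `Λ' = λ` on `(t₀,T)`. For any `α` with `1 − α·exp(Λ t) > 0` on `(t₀,T)`,
the function `f t = λ t / (1 − α·exp(Λ t))` is positive and differentiable on
`(t₀,T)` and satisfies the score ODE `f'/f − f = λ'/λ − λ` there. -/
theorem score_ode_family_of_solutions
    {t₀ T : ℝ} (lam lamd Lam : ℝ → ℝ)
    (hlam : ∀ t, HasDerivAt lam (lamd t) t)
    (hlampos : ∀ t ∈ Set.Ioo t₀ T, 0 < lam t)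
    (hLam : ∀ t ∈ Set.Ioo t₀ T, HasDerivAt Lam (lam t) t)
    (α : ℝ) (hα : ∀ t ∈ Set.Ioo t₀ T, 0 < 1 - α * Real.exp (Lam t))
    (f : ℝ → ℝ) (hf : ∀ t, f t = lam t / (1 - α * Real.exp (Lam t))) :
    ∀ t ∈ Set.Ioo t₀ T, 0 < f t ∧ DifferentiableAt ℝ f t ∧
      deriv f t / f t - f t = lamd t / lam t - lam t := by
  intro t ht
  have hg : 0 < 1 - α * Real.exp (Lam t) := hα t ht
  have hlpos : 0 < lam t := hlampos t ht
  have hfpos : 0 < f t := by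
    rw [hf t]; exact div_pos hlpos hg
  have hfe : f = fun t => lam t / (1 - α * Real.exp (Lam t)) := funext hf
  have hden : HasDerivAt (fun t => 1 - α * Real.exp (Lam t))
      (-(α * (Real.exp (Lam t) * lam t))) t := by
    have := (((hLam t ht).exp).const_mul α).const_sub 1
    simpa [mul_assoc] using this
  have hdf : HasDerivAt f
      ((lamd t * (1 - α * Real.exp (Lam t)) -
        lam t * (-(α * (Real.exp (Lam t) * lam t)))) /
        (1 - α * Real.exp (Lam t)) ^ 2) t := by
    rw [hfe]
    exact (hlam t).div hden hg.ne'
  refine ⟨hfpos, hdf.differentiableAt, ?_⟩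
  rw [hdf.deriv, hf t]
  field_simp
  ring
end

section
/- Let t₀ < T. Let λ̃ : ℝ → ℝ be continuous with λ̃(t) > 0 for all t ∈ [t₀,T], set Λ̃(t) = ∫_{t₀}^t λ̃(τ)dτ, G̃(t) = exp(−Λ̃(t)), and q(t) = λ̃(t)·G̃(t). Let κ > 0 and let p : ℝ → ℝ satisfy p(t) = κ·q(t) for all t ∈ (t₀,T), and set F = ∫_{t₀}^T p(τ)dτ = κ·(1 − G̃(T)); assume F ≤ 1. Then for every t ∈ (t₀,T), both 1 − ∫_{t₀}^t p(τ)dτ and G̃(t) + (1 − G̃(T))/F − 1 are strictly positive, and the hazard of p satisfies p(t)/(1 − ∫_{t₀}^t p(τ)dτ) = G̃(t)·λ̃(t)/(G̃(t) + (1 − G̃(T))/F − 1). -/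
/-!
On `(t₀, T)` the density `p = κ q` integrates to `κ (1 - G̃ t)`, since `q = λ̃ G̃ = -G̃'`.
Hence `F = κ (1 - G̃ T)`, so `(1 - G̃ T) / F = 1 / κ`, and both the hazard of `p` and the
claimed formula reduce to `λ̃ G̃ t / (G̃ t + 1/κ - 1)`. Positivity of the denominator comes
from `G̃` being strictly decreasing: `κ (1 - G̃ t) < κ (1 - G̃ T) = F ≤ 1`.
-/

open MeasureTheory intervalIntegral Set

noncomputable def survivalFun (lam : ℝ → ℝ) (t₀ t : ℝ) : ℝ :=
  Real.exp (-∫ τ in t₀..t, lam τ)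

section

variable {lam : ℝ → ℝ} {t₀ : ℝ}

@[simp]
theorem survivalFun_self : survivalFun lam t₀ t₀ = 1 := by
  simp [survivalFun]

theorem hasDerivAt_survivalFun (hlam : Continuous lam) (t : ℝ) :
    HasDerivAt (survivalFun lam t₀) (-(lam t * survivalFun lam t₀ t)) t := by
  have hInt : HasDerivAt (fun u => -∫ τ in t₀..u, lam τ) (-lam t) t :=
    (integral_hasDerivAt_right (hlam.intervalIntegrable t₀ t)
      (hlam.stronglyMeasurableAtFilter _ _) hlam.continuousAt).neg
  refine hInt.exp.congr_deriv ?_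
  rw [survivalFun]
  ring

theorem continuous_survivalFun (hlam : Continuous lam) : Continuous (survivalFun lam t₀) :=
  continuous_iff_continuousAt.mpr fun t => (hasDerivAt_survivalFun hlam t).continuousAt

theorem integral_mul_survivalFun (hlam : Continuous lam) (a b : ℝ) :
    ∫ τ in a..b, lam τ * survivalFun lam t₀ τ = survivalFun lam t₀ a - survivalFun lam t₀ b := by
  rw [integral_eq_sub_of_hasDerivAt (f := -survivalFun lam t₀)
    (f' := fun τ => lam τ * survivalFun lam t₀ τ)
    (fun x _ => by simpa only [neg_neg] using (hasDerivAt_survivalFun hlam x).neg)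
    ((hlam.mul (continuous_survivalFun hlam)).intervalIntegrable a b), Pi.neg_apply, Pi.neg_apply]
  ring

theorem survivalFun_strictAntiOn (hlam : Continuous lam) {s : Set ℝ} (hs : s.OrdConnected)
    (hpos : ∀ t ∈ s, 0 < lam t) : StrictAntiOn (survivalFun lam t₀) s := by
  intro x hx y hy hxy
  have hdens : 0 < ∫ τ in x..y, lam τ * survivalFun lam t₀ τ := by
    refine intervalIntegral_pos_of_pos_on
      ((hlam.mul (continuous_survivalFun hlam)).intervalIntegrable x y) (fun τ hτ => ?_) hxy
    exact mul_pos (hpos τ (hs.out hx hy (Ioo_subset_Icc_self hτ))) (Real.exp_pos _)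
  linarith [integral_mul_survivalFun (t₀ := t₀) hlam x y]

end

theorem integral_eq_mul_one_sub_survivalFun {lam p : ℝ → ℝ} {t₀ T κ t : ℝ}
    (hlam : Continuous lam)
    (hp : EqOn p (fun τ => κ * (lam τ * survivalFun lam t₀ τ)) (Ioo t₀ T))
    (ht₀ : t₀ ≤ t) (htT : t ≤ T) :
    ∫ τ in t₀..t, p τ = κ * (1 - survivalFun lam t₀ t) := by
  rw [integral_congr_Ioo_of_le ht₀ (hp.mono (Ioo_subset_Ioo_right htT)),
    intervalIntegral.integral_const_mul,
    integral_mul_survivalFun hlam, survivalFun_self]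

theorem scaled_density_hazard_identity {κ g gT : ℝ} (hκ : 0 < κ) (hgT : gT < g) (hgT₁ : gT < 1)
    (hF : κ * (1 - gT) ≤ 1) (l : ℝ) :
    0 < 1 - κ * (1 - g) ∧ 0 < g + (1 - gT) / (κ * (1 - gT)) - 1 ∧
      κ * (l * g) / (1 - κ * (1 - g)) = g * l / (g + (1 - gT) / (κ * (1 - gT)) - 1) := by
  have hmass : 0 < 1 - κ * (1 - g) := by nlinarith
  have hden : g + (1 - gT) / (κ * (1 - gT)) - 1 = (1 - κ * (1 - g)) / κ := by
    field_simp [(sub_pos.2 hgT₁).ne']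
    ring
  refine ⟨hmass, hden ▸ div_pos hmass hκ, ?_⟩
  rw [hden]
  field_simp

/-- **Theorem (intensity recovery from a surrogate intensity and a survival
probability).** Let `λ̃` be continuous and positive on `[t₀,T]`, with cumulative
intensity `Λ̃`, survivor `G̃ = exp(−Λ̃)`, and unnormalized density `q = λ̃·G̃`. If the
conditional density `p` satisfies `p = κ·q` on `(t₀,T)` for some `κ > 0` and
`F = ∫_{t₀}^T p ≤ 1`, then `F = κ(1 − G̃ T)`, and for every `t ∈ (t₀,T)` both
`1 − ∫_{t₀}^t p` and `G̃ t + (1 − G̃ T)/F − 1` are strictly positive and the hazard of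
`p` equals `G̃ t · λ̃ t / (G̃ t + (1 − G̃ T)/F − 1)`. -/
theorem hazard_recovery_from_survival
    {t₀ T : ℝ} (htT : t₀ < T)
    (lam : ℝ → ℝ) (hlamc : Continuous lam)
    (hlampos : ∀ t ∈ Set.Icc t₀ T, 0 < lam t)
    (Lam G q : ℝ → ℝ)
    (hLam : ∀ t, Lam t = ∫ τ in t₀..t, lam τ)
    (hG : ∀ t, G t = Real.exp (-Lam t))
    (hq : ∀ t, q t = lam t * G t)
    (κ : ℝ) (hκ : 0 < κ)
    (p : ℝ → ℝ) (hp : ∀ t ∈ Set.Ioo t₀ T, p t = κ * q t)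
    (F : ℝ) (hF : F = ∫ τ in t₀..T, p τ) (hF1 : F ≤ 1) :
    F = κ * (1 - G T) ∧
      ∀ t ∈ Set.Ioo t₀ T,
        (0 < 1 - ∫ τ in t₀..t, p τ) ∧
        (0 < G t + (1 - G T) / F - 1) ∧
        p t / (1 - ∫ τ in t₀..t, p τ) =
          G t * lam t / (G t + (1 - G T) / F - 1) := by
  have hGS : G = survivalFun lam t₀ := funext fun t => by rw [hG, hLam, survivalFun]
  have hpS : EqOn p (fun τ => κ * (lam τ * survivalFun lam t₀ τ)) (Ioo t₀ T) := fun t ht => by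
    rw [hp t ht, hq, hGS]
  have hintp : ∀ t ∈ Ioc t₀ T, ∫ τ in t₀..t, p τ = κ * (1 - G t) := fun t ht =>
    hGS ▸ integral_eq_mul_one_sub_survivalFun hlamc hpS ht.1.le ht.2
  have hanti : StrictAntiOn G (Icc t₀ T) :=
    hGS ▸ survivalFun_strictAntiOn hlamc ordConnected_Icc hlampos
  have hFG : F = κ * (1 - G T) := hF.trans (hintp T ⟨htT, le_rfl⟩)
  refine ⟨hFG, fun t ht => ?_⟩
  have hGT₁ : G T < 1 := by
    simpa [hGS] using hanti (left_mem_Icc.2 htT.le) (right_mem_Icc.2 htT.le) htT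
  have hGTt : G T < G t := hanti (Ioo_subset_Icc_self ht) (right_mem_Icc.2 htT.le) ht.2
  rw [hintp t ⟨ht.1, ht.2.le⟩, hp t ht, hq t, hFG]
  exact scaled_density_hazard_identity hκ hGTt hGT₁ (hFG ▸ hF1) (lam t)
end

section
/- Let t₁, …, t_M be a nonempty finite list of strictly positive reals and set C = Σ_{k=1}^M 1/t_k² > 0. For θ ∈ ℝ, define the implicit score-matching objective of the inhomogeneous Poisson intensity model λ_θ(t) = θ·t^{θ−1}, whose score at an event time t is ψ_θ(t) = (θ−1)/t with derivative ∂_tψ_θ(t) = (1−θ)/t²: Ĵ(θ) = Σ_{k=1}^M [ (1/2)((θ−1)/t_k)² + (1−θ)/t_k² ]. Then Ĵ(θ) = (1/2)(θ−1)(θ−3)·C for all θ ∈ ℝ, and Ĵ has a unique global minimizer over ℝ at θ = 2, independent of the observed data. -/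
/-- **Theorem (failure of unweighted implicit score matching for the Poisson process
with intensity `λ_θ(t) = θ·t^{θ−1}`).** For a nonempty finite list of observed event
times `t₁,…,t_M > 0`, with `C = Σ 1/t_k² > 0`, the implicit score-matching objective
`Ĵ(θ) = Σ_k [(1/2)((θ−1)/t_k)² + (1−θ)/t_k²]` equals `(1/2)(θ−1)(θ−3)·C`, and has a
unique global minimizer at `θ = 2`, independent of the observed data. -/
theorem poisson_implicit_sm_failure
    {M : ℕ} (hM : 1 ≤ M) (t : Fin M → ℝ) (ht : ∀ k, 0 < t k)
    (C : ℝ) (hC : C = ∑ k, 1 / t k ^ 2)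
    (J : ℝ → ℝ)
    (hJ : ∀ θ, J θ = ∑ k, ((1 / 2) * ((θ - 1) / t k) ^ 2 + (1 - θ) / t k ^ 2)) :
    0 < C ∧ (∀ θ, J θ = (1 / 2) * (θ - 1) * (θ - 3) * C) ∧
      (∀ θ, J 2 ≤ J θ) ∧ (∀ θ, J θ = J 2 → θ = 2) := by
  have hCpos : 0 < C := by
    rw [hC]
    apply Finset.sum_pos
    · intro k _
      exact div_pos one_pos (pow_pos (ht k) 2)
    · exact Finset.univ_nonempty_iff.mpr ⟨⟨0, hM⟩⟩
  have hform : ∀ θ : ℝ, J θ = (1 / 2) * (θ - 1) * (θ - 3) * C := by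
    intro θ
    rw [hJ, hC, Finset.mul_sum]
    apply Finset.sum_congr rfl
    intro k _
    have hk := (ht k).ne'
    field_simp
    ring
  refine ⟨hCpos, hform, ?_, ?_⟩
  · intro θ
    rw [hform, hform]
    nlinarith [sq_nonneg (θ - 2)]
  · intro θ h
    rw [hform, hform] at h
    have h2 : (θ - 2) ^ 2 * C = 0 := by ring_nf; ring_nf at h; linarith
    have h3 : (θ - 2) ^ 2 = 0 := by
      rcases mul_eq_zero.mp h2 with h4 | h4
      · exact h4
      · exact absurd h4 hCpos.ne'
    have := pow_eq_zero_iff (n := 2) (by norm_num) |>.mp h3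
    linarith
end

section
/- Let μ be a probability measure on a measurable space Ω carrying a temporal point process on (0,T): a measurable count N : Ω → ℕ and measurable times with 0 = t_0(ω) ≤ t_1(ω) ≤ ⋯ ≤ t_{N(ω)}(ω) ≤ T. Let ψ_{T,n,θ} : Ω → ℝ be model temporal scores vanishing when N(ω) < n, with data-generating parameter θ*. Let h : ℝ×ℝ → [0,∞) satisfy: for each u ∈ [0,T], the map t ↦ h(u,t) is 1-Lipschitz, h(u,u) = 0, and h(u,T) = 0. Set h₀(u,t) = min(t−u, T−t). Then h(u,t) ≤ h₀(u,t) whenever 0 ≤ u ≤ t ≤ T, and consequently for every θ ∈ Θ the explicit temporal autoregressive weighted score-matching losses satisfy L_h(θ) ≤ L_{h₀}(θ), where L_h(θ) = (1/2)∫_Ω Σ_{n=1}^{N(ω)} (ψ_{T,n,θ*}(ω) − ψ_{T,n,θ}(ω))² h(t_{n−1}(ω), t_n(ω)) dμ(ω) ∈ [0,∞]. -/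
open MeasureTheory
open scoped ENNReal

/-- **Theorem (the temporal distance-to-boundary weight dominates the explicit
temporal AWSM loss).** For a temporal point process on `(0,T)` with count `N`,
ordered times `t n`, and temporal model scores `ψ θ n` vanishing when `N ω < n`, if a
nonnegative weight `h(u,·)` is `1`-Lipschitz with `h(u,u) = h(u,T) = 0` for every
`u ∈ [0,T]`, then `h(u,s) ≤ h₀(u,s) = min(s−u, T−s)` whenever `0 ≤ u ≤ s ≤ T`, and
consequently the explicit temporal autoregressive weighted score-matching loss of `h`
is dominated by that of `h₀`. -/
theorem awsm_temporal_distance_weight_dominates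
    {Ω : Type*} [MeasurableSpace Ω] (μ : Measure Ω) [IsProbabilityMeasure μ]
    {p : ℕ} (T : ℝ) (hTpos : 0 < T)
    (N : Ω → ℕ) (hN : Measurable N)
    (t : ℕ → Ω → ℝ) (ht : ∀ n, Measurable (t n))
    (ht0 : ∀ ω, t 0 ω = 0)
    (htmono : ∀ ω n, 1 ≤ n → n ≤ N ω → t (n - 1) ω ≤ t n ω)
    (htT : ∀ ω n, n ≤ N ω → t n ω ≤ T)
    (Θ : Set (EuclideanSpace ℝ (Fin p)))
    (ψ : EuclideanSpace ℝ (Fin p) → ℕ → Ω → ℝ)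
    (hψzero : ∀ θ n ω, N ω < n → ψ θ n ω = 0)
    (θstar : EuclideanSpace ℝ (Fin p)) (hθstar : θstar ∈ Θ)
    (h : ℝ → ℝ → ℝ) (hnonneg : ∀ u s, 0 ≤ h u s)
    (hlip : ∀ u ∈ Set.Icc (0 : ℝ) T, LipschitzWith 1 (h u))
    (hdiag : ∀ u ∈ Set.Icc (0 : ℝ) T, h u u = 0)
    (hend : ∀ u ∈ Set.Icc (0 : ℝ) T, h u T = 0)
    (h₀ : ℝ → ℝ → ℝ) (hh₀ : ∀ u s, h₀ u s = min (s - u) (T - s))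
    (L : (ℝ → ℝ → ℝ) → EuclideanSpace ℝ (Fin p) → ℝ≥0∞)
    (hL : ∀ w θ, L w θ = (1 / 2 : ℝ≥0∞) *
      ∫⁻ ω, ∑ n ∈ Finset.Icc 1 (N ω),
        ENNReal.ofReal ((ψ θstar n ω - ψ θ n ω) ^ 2 * w (t (n - 1) ω) (t n ω)) ∂μ) :
    (∀ u s, 0 ≤ u → u ≤ s → s ≤ T → h u s ≤ h₀ u s) ∧
      (∀ θ ∈ Θ, L h θ ≤ L h₀ θ) := by

  have key : ∀ u s, 0 ≤ u → u ≤ s → s ≤ T → h u s ≤ h₀ u s := by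
    intro u s hu hus hsT
    have huT : u ∈ Set.Icc (0:ℝ) T := ⟨hu, le_trans hus hsT⟩
    have hlip' := hlip u huT
    have hd1 := hlip'.dist_le_mul s u
    have hd2 := hlip'.dist_le_mul s T
    rw [hdiag u huT] at hd1
    rw [hend u huT] at hd2
    rw [Real.dist_eq, Real.dist_eq, abs_of_nonneg (by linarith : (0:ℝ) ≤ s - u)] at hd1
    rw [Real.dist_eq, Real.dist_eq, abs_of_nonpos (by linarith : s - T ≤ (0:ℝ))] at hd2
    norm_num at hd1 hd2
    have h1 : h u s ≤ s - u := by
      have := (le_abs_self (h u s)).trans hd1; linarith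
    have h2 : h u s ≤ T - s := by
      have := (le_abs_self (h u s)).trans hd2; linarith
    rw [hh₀]; exact le_min h1 h2
  refine ⟨key, ?_⟩
  intro θ _
  rw [hL, hL]
  refine mul_le_mul_right (lintegral_mono fun ω => ?_) _
  refine Finset.sum_le_sum fun n hn => ?_
  obtain ⟨hn1, hnN⟩ := Finset.mem_Icc.mp hn
  have htnonneg : ∀ k, k ≤ N ω → 0 ≤ t k ω := by
    intro k hk
    induction k with
    | zero => rw [ht0]
    | succ m ih =>
      have h1 : 1 ≤ m + 1 := Nat.le_add_left 1 m
      have := htmono ω (m+1) h1 hk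
      simp only [Nat.add_sub_cancel] at this
      exact le_trans (ih (Nat.le_of_succ_le hk)) this
  have hu0 : 0 ≤ t (n-1) ω := htnonneg _ (le_trans (Nat.sub_le n 1) hnN)
  have hus : t (n-1) ω ≤ t n ω := htmono ω n hn1 hnN
  have hsT : t n ω ≤ T := htT ω n hnN
  exact ENNReal.ofReal_le_ofReal
    (mul_le_mul_of_nonneg_left (key _ _ hu0 hus hsT) (sq_nonneg _))
end
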